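/- arXiv:2111.12633 — 4 statements merged into one kernel-verified Lean document; each statement's English description precedes it below -/
import Mathlib

section
/- Let m > 0 and T > 0. The switched scalar differential equation F(m,T): dV/dt = 2(u(t) − m·sinh(V(t))), where u is the 2T-periodic square wave equal to +1 on [0,T) and −1 on [T,2T), has a unique 2T-periodic solution P_{m,T}. This periodic solution is globally asymptotically stable: for every solution V of F(m,T), V(t) − P_{m,T}(t) → 0 as t → ∞. Moreover P_{m,T} takes its values in the interval [V_m^−, V_m^+], where V_m^+ = arcsinh(1/m) and V_m^− = −arcsinh(1/m), and its minimum value P^−_{m,T} and maximum value P^+_{m,T} satisfy P^−_{m,T} = −P^+_{m,T}. -/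
open Real Filter Set

/-- The `2T`-periodic square wave: `+1` on `[0,T)`, `-1` on `[T,2T)`. -/
noncomputable def squareWave (T t : ℝ) : ℝ :=
  if Int.fract (t / (2 * T)) < 1 / 2 then 1 else -1

/-- A solution of the switched system `F(m,T)`: a continuous function satisfying
`dV/dt = 2(u(t) - m sinh V)` away from the switching times `nT`, `n ∈ ℤ`. -/
def IsSolF (m T : ℝ) (V : ℝ → ℝ) : Prop :=
  Continuous V ∧ ∀ t : ℝ, (∀ n : ℤ, t ≠ n * T) →
    HasDerivAt V (2 * (squareWave T t - m * Real.sinh (V t))) t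

open Topology

/-!
Two solutions `V`, `W` of `F(m,T)` contract: `sinh' = cosh ≥ 1` gives
`d/dt (V - W)² ≤ -4m (V - W)²` between switching times, and continuity carries the resulting
monotonicity of `exp (4mt) (V - W)²` across them. This yields uniqueness of the `2T`-periodic
solution and its global attractivity.

For existence, `w = exp V` turns the equation with `u = 1` into the logistic equation
`w' = m (p - w) (w + p⁻¹)`, `p = exp V_m^+`, which is solved in closed form. Its flow keeps
`[V_m^-, V_m^+]` invariant, so by the intermediate value theorem some `v ∈ [V_m^-, 0]` is sent
to `-v` in time `T`. Since `u (t + T) = -u t` and `sinh` is odd, extending this trajectory by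
`P (t + T) = -P t` gives a solution; it is `2T`-periodic and its range is symmetric.
-/

section Riccati

variable {k P Q x t : ℝ}

noncomputable def riccatiDen (k P Q x t : ℝ) : ℝ :=
  (x - Q) + (P - x) * exp (-(k * (P - Q) * t))

/-- The solution of the logistic equation `w' = k (P - w) (w - Q)` with `w 0 = x`. -/
noncomputable def riccatiFlow (k P Q x t : ℝ) : ℝ :=
  (P * (x - Q) + Q * (P - x) * exp (-(k * (P - Q) * t))) / riccatiDen k P Q x t

lemma riccatiDen_pos (hQx : Q < x) (hxP : x ≤ P) : 0 < riccatiDen k P Q x t := by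
  unfold riccatiDen
  have := mul_nonneg (sub_nonneg.2 hxP) (exp_pos (-(k * (P - Q) * t))).le
  linarith

lemma riccatiFlow_zero (hPQ : P ≠ Q) : riccatiFlow k P Q x 0 = x := by
  rw [riccatiFlow, riccatiDen, mul_zero, neg_zero, exp_zero,
    div_eq_iff (by simpa using sub_ne_zero.2 hPQ)]
  ring

lemma hasDerivAt_riccatiFlow (hD : riccatiDen k P Q x t ≠ 0) :
    HasDerivAt (riccatiFlow k P Q x)
      (k * (P - riccatiFlow k P Q x t) * (riccatiFlow k P Q x t - Q)) t := by
  have hE : HasDerivAt (fun s => exp (-(k * (P - Q) * s)))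
      (exp (-(k * (P - Q) * t)) * -(k * (P - Q) * 1)) t :=
    ((hasDerivAt_id' t).const_mul (k * (P - Q))).fun_neg.exp
  have hN := (hE.const_mul (Q * (P - x))).const_add (P * (x - Q))
  have hD' := (hE.const_mul (P - x)).const_add (x - Q)
  refine (hN.fun_div hD' hD).congr_deriv ?_
  unfold riccatiFlow riccatiDen at *
  field_simp
  ring

lemma riccatiFlow_mem_Icc (hk : 0 ≤ k) (hQx : Q < x) (hxP : x ≤ P) (ht : 0 ≤ t) :
    riccatiFlow k P Q x t ∈ Icc x P := by
  have hD := riccatiDen_pos (k := k) (t := t) hQx hxP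
  have hQP := hQx.trans_le hxP
  have hE1 : exp (-(k * (P - Q) * t)) ≤ 1 :=
    exp_le_one_iff.2 (neg_nonpos.2 (mul_nonneg (mul_nonneg hk (sub_nonneg.2 hQP.le)) ht))
  have hE0 := exp_pos (-(k * (P - Q) * t))
  unfold riccatiFlow riccatiDen at *
  rw [mem_Icc, le_div_iff₀ hD, div_le_iff₀ hD]
  constructor
  · nlinarith [mul_nonneg (mul_nonneg (sub_nonneg.2 hxP) (sub_pos.2 hQx).le) (sub_nonneg.2 hE1)]
  · nlinarith [mul_nonneg (mul_nonneg (sub_nonneg.2 hxP) (sub_pos.2 hQP).le) hE0.le]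

lemma continuousAt_riccatiFlow_initial (hD : riccatiDen k P Q x t ≠ 0) :
    ContinuousAt (fun y => riccatiFlow k P Q y t) x := by
  unfold riccatiFlow riccatiDen at *
  exact ContinuousAt.div (by fun_prop) (by fun_prop) hD

end Riccati

section PlusFlow

variable {m v t : ℝ}

lemma mul_exp_arsinh_sub_inv (hm : m ≠ 0) :
    m * (exp (arsinh (1 / m)) - (exp (arsinh (1 / m)))⁻¹) = 2 := by
  calc m * (exp (arsinh (1 / m)) - (exp (arsinh (1 / m)))⁻¹)
      = m * (2 * sinh (arsinh (1 / m))) := by rw [sinh_eq, exp_neg]; ring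
    _ = 2 := by rw [sinh_arsinh]; field_simp

/-- The flow of `V' = 2 (1 - m sinh V)`: `w = exp V` solves `w' = m (p - w) (w + p⁻¹)` with
`p = exp (arsinh (1 / m))`, the roots `p` and `-p⁻¹` of `m w ^ 2 - 2 w - m`. -/
noncomputable def plusFlow (m v t : ℝ) : ℝ :=
  log (riccatiFlow m (exp (arsinh (1 / m))) (-(exp (arsinh (1 / m)))⁻¹) (exp v) t)

lemma neg_inv_exp_lt_exp (a b : ℝ) : -(exp a)⁻¹ < exp b := by
  have := exp_pos b; have := inv_pos.2 (exp_pos a); linarith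

lemma plusFlow_zero : plusFlow m v 0 = v := by
  rw [plusFlow, riccatiFlow_zero (neg_inv_exp_lt_exp _ _).ne', log_exp]

lemma riccatiFlow_plus_mem_Icc (hm : 0 < m) (hv : v ≤ arsinh (1 / m)) (ht : 0 ≤ t) :
    riccatiFlow m (exp (arsinh (1 / m))) (-(exp (arsinh (1 / m)))⁻¹) (exp v) t
      ∈ Icc (exp v) (exp (arsinh (1 / m))) :=
  riccatiFlow_mem_Icc hm.le (neg_inv_exp_lt_exp _ _) (exp_le_exp.2 hv) ht

lemma plusFlow_mem_Icc (hm : 0 < m) (hv : v ≤ arsinh (1 / m)) (ht : 0 ≤ t) :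
    plusFlow m v t ∈ Icc v (arsinh (1 / m)) := by
  obtain ⟨h₁, h₂⟩ := riccatiFlow_plus_mem_Icc hm hv ht
  exact ⟨(log_exp v).symm.trans_le (log_le_log (exp_pos v) h₁),
    (log_le_log ((exp_pos v).trans_le h₁) h₂).trans_eq (log_exp _)⟩

lemma hasDerivAt_plusFlow (hm : 0 < m) (hv : v ≤ arsinh (1 / m)) (ht : 0 ≤ t) :
    HasDerivAt (plusFlow m v) (2 * (1 - m * sinh (plusFlow m v t))) t := by
  have hw := (exp_pos v).trans_le (riccatiFlow_plus_mem_Icc hm hv ht (t := t)).1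
  have hD := riccatiDen_pos (k := m) (t := t) (neg_inv_exp_lt_exp (arsinh (1 / m)) v)
    (exp_le_exp.2 hv)
  refine ((hasDerivAt_riccatiFlow hD.ne').log hw.ne').congr_deriv ?_
  rw [plusFlow, sinh_log hw]
  have hp := mul_exp_arsinh_sub_inv hm.ne'
  have hp0 := (exp_pos (arsinh (1 / m))).ne'
  generalize exp (arsinh (1 / m)) = p at hp hp0 hw ⊢
  generalize riccatiFlow m p (-p⁻¹) (exp v) t = w at hw ⊢
  field_simp at hp ⊢
  linear_combination w * hp

lemma continuousOn_plusFlow (hm : 0 < m) (ht : 0 ≤ t) :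
    ContinuousOn (fun v => plusFlow m v t) (Iic (arsinh (1 / m))) := by
  intro v hv
  have hD := riccatiDen_pos (k := m) (t := t) (neg_inv_exp_lt_exp (arsinh (1 / m)) v)
    (exp_le_exp.2 hv)
  refine ContinuousAt.continuousWithinAt (ContinuousAt.log ?_ ?_)
  · exact (continuousAt_riccatiFlow_initial hD.ne').comp continuous_exp.continuousAt
  · exact ((exp_pos v).trans_le (riccatiFlow_plus_mem_Icc hm hv ht).1).ne'

lemma exists_plusFlow_eq_neg (hm : 0 < m) {T : ℝ} (hT : 0 ≤ T) :
    ∃ v ∈ Icc (-arsinh (1 / m)) 0, plusFlow m v T = -v := by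
  have ha : 0 ≤ arsinh (1 / m) := arsinh_nonneg_iff.2 (by positivity)
  have hcont : ContinuousOn (fun v => plusFlow m v T + v) (Icc (-arsinh (1 / m)) 0) :=
    ((continuousOn_plusFlow hm hT).mono fun v hv => hv.2.trans ha).add continuousOn_id
  have hlow := (plusFlow_mem_Icc hm (by linarith) hT (v := -arsinh (1 / m))).2
  have hhigh := (plusFlow_mem_Icc hm ha hT (v := 0)).1
  obtain ⟨v, hv, hv0⟩ := intermediate_value_Icc (by linarith) hcont
    (show (0 : ℝ) ∈ Icc _ _ from ⟨by linarith, by simpa using hhigh⟩)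
  exact ⟨v, hv, eq_neg_of_add_eq_zero_left hv0⟩

end PlusFlow

section AntiperiodicExtension

variable {T t : ℝ} {g : ℝ → ℝ}

lemma floor_div_mul_mem_Ico (hT : 0 < T) (t : ℝ) :
    t ∈ Ico (⌊t / T⌋ * T) ((⌊t / T⌋ + 1) * T) :=
  ⟨(le_div_iff₀ hT).1 (Int.floor_le _), (div_lt_iff₀ hT).1 (Int.lt_floor_add_one _)⟩

lemma ceil_div_sub_one_mul_mem_Ioc (hT : 0 < T) (t : ℝ) :
    t ∈ Ioc (((⌈t / T⌉ - 1 : ℤ) : ℝ) * T)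
      ((((⌈t / T⌉ - 1 : ℤ) : ℝ) + 1) * T) := by
  push_cast
  exact ⟨(lt_div_iff₀ hT).1 (by linarith [Int.ceil_lt_add_one (t / T)]),
    (div_le_iff₀ hT).1 (by simpa using Int.le_ceil (t / T))⟩

lemma floor_div_eq_of_mem_Ico (hT : 0 < T) {k : ℤ} (ht : t ∈ Ico (k * T) ((k + 1) * T)) :
    ⌊t / T⌋ = k :=
  Int.floor_eq_iff.2 ⟨(le_div_iff₀ hT).2 ht.1, (div_lt_iff₀ hT).2 ht.2⟩

lemma ne_int_mul_of_mem_Ioo (hT : 0 < T) {k : ℤ} (ht : t ∈ Ioo (k * T) ((k + 1) * T))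
    (n : ℤ) : t ≠ n * T := by
  rintro rfl
  have h₁ : k < n := by exact_mod_cast (mul_lt_mul_iff_of_pos_right hT).1 ht.1
  have h₂ : n < k + 1 := by exact_mod_cast (mul_lt_mul_iff_of_pos_right hT).1 ht.2
  omega

/-- The function equal to `g` on `[0, T)` and changing sign under `t ↦ t + T`. -/
noncomputable def antiperiodicExtension (T : ℝ) (g : ℝ → ℝ) (t : ℝ) : ℝ :=
  (-1) ^ ⌊t / T⌋ * g (t - ⌊t / T⌋ * T)

lemma antiperiodicExtension_antiperiodic (hT : T ≠ 0) :
    Function.Antiperiodic (antiperiodicExtension T g) T := by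
  intro t
  rw [antiperiodicExtension, antiperiodicExtension, add_div, div_self hT, Int.floor_add_one,
    zpow_add_one₀ (by norm_num), Int.cast_add, Int.cast_one,
    show t + T - (⌊t / T⌋ + 1) * T = t - ⌊t / T⌋ * T by ring]
  ring

lemma antiperiodicExtension_eq_of_mem_Ico (hT : 0 < T) {k : ℤ}
    (ht : t ∈ Ico (k * T) ((k + 1) * T)) :
    antiperiodicExtension T g t = (-1) ^ k * g (t - k * T) := by
  rw [antiperiodicExtension, floor_div_eq_of_mem_Ico hT ht]

lemma antiperiodicExtension_eq_of_mem_Ioc (hT : 0 < T) (hg : g T = -g 0) {k : ℤ}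
    (ht : t ∈ Ioc (k * T) ((k + 1) * T)) :
    antiperiodicExtension T g t = (-1) ^ k * g (t - k * T) := by
  rcases ht.2.lt_or_eq with hlt | rfl
  · exact antiperiodicExtension_eq_of_mem_Ico hT ⟨ht.1.le, hlt⟩
  · have h := antiperiodicExtension_eq_of_mem_Ico (g := g) (k := k + 1) hT
      (t := (k + 1) * T) (by push_cast; exact ⟨le_rfl, by linarith⟩)
    rw [h]
    push_cast
    rw [sub_self, show (k + 1) * T - k * T = T by ring, hg, zpow_add_one₀ (by norm_num)]
    ring

lemma continuous_antiperiodicExtension (hT : 0 < T) (hg : ∀ τ ∈ Icc 0 T, ContinuousAt g τ)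
    (hgT : g T = -g 0) : Continuous (antiperiodicExtension T g) := by
  refine continuous_iff_continuousAt.2 fun t => ?_
  have piece : ∀ k : ℤ, t ∈ Icc (k * T) ((k + 1) * T) →
      ContinuousAt (fun s => (-1) ^ k * g (s - k * T)) t := fun k ht =>
    ((hg _ ⟨sub_nonneg.2 ht.1, by linarith [ht.2]⟩).comp' (f := fun s => s - k * T)
      (by fun_prop)).const_mul _
  rw [continuousAt_iff_continuous_left_right]
  constructor
  · obtain ⟨h₁, h₂⟩ := ceil_div_sub_one_mul_mem_Ioc hT t
    refine (piece _ ⟨h₁.le, h₂⟩).continuousWithinAt.congr_of_eventuallyEq ?_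
      (antiperiodicExtension_eq_of_mem_Ioc hT hgT ⟨h₁, h₂⟩)
    filter_upwards [Ioc_mem_nhdsLE h₁] with s hs
    exact antiperiodicExtension_eq_of_mem_Ioc hT hgT ⟨hs.1, hs.2.trans h₂⟩
  · obtain ⟨h₁, h₂⟩ := floor_div_mul_mem_Ico hT t
    refine (piece _ ⟨h₁, h₂.le⟩).continuousWithinAt.congr_of_eventuallyEq ?_
      (antiperiodicExtension_eq_of_mem_Ico hT ⟨h₁, h₂⟩)
    filter_upwards [Ico_mem_nhdsGE h₂] with s hs
    exact antiperiodicExtension_eq_of_mem_Ico hT ⟨h₁.trans hs.1, hs.2⟩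

lemma hasDerivAt_antiperiodicExtension (hT : 0 < T) {k : ℤ}
    (ht : t ∈ Ioo (k * T) ((k + 1) * T)) {g' : ℝ} (hg : HasDerivAt g g' (t - k * T)) :
    HasDerivAt (antiperiodicExtension T g) ((-1) ^ k * g') t := by
  refine ((hg.comp_sub_const t (k * T)).const_mul _).congr_of_eventuallyEq ?_
  filter_upwards [Ioo_mem_nhds ht.1 ht.2] with s hs
  exact antiperiodicExtension_eq_of_mem_Ico hT (Ioo_subset_Ico_self hs)

end AntiperiodicExtension

lemma Function.Antiperiodic.sInf_range_eq_neg_sSup {α : Type*} {f : α → ℝ} {c : α} [Add α]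
    (hf : Function.Antiperiodic f c) : sInf (range f) = -sSup (range f) := by
  have : -range f = range f := by
    ext x
    refine ⟨fun ⟨t, ht⟩ => ⟨t + c, by rw [hf, ht, neg_neg]⟩, ?_⟩
    rintro ⟨t, rfl⟩
    exact ⟨t + c, hf t⟩
  rw [Real.sInf_def, this]

lemma squareWave_eq_neg_one_zpow {T t : ℝ} (hT : 0 < T) {k : ℤ}
    (ht : t ∈ Ico (k * T) ((k + 1) * T)) : squareWave T t = (-1) ^ k := by
  have h2T : 0 < 2 * T := by positivity
  obtain ⟨j, rfl | rfl⟩ := k.even_or_odd' <;> push_cast at ht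
  · have hfl : ⌊t / (2 * T)⌋ = j :=
      floor_div_eq_of_mem_Ico h2T ⟨by linarith [ht.1], by linarith [ht.2]⟩
    rw [squareWave, if_pos, (even_two_mul j).neg_one_zpow]
    rw [Int.fract, hfl, sub_lt_iff_lt_add, div_lt_iff₀ h2T]
    linarith [ht.2]
  · have hfl : ⌊t / (2 * T)⌋ = j :=
      floor_div_eq_of_mem_Ico h2T ⟨by linarith [ht.1], by linarith [ht.2]⟩
    rw [squareWave, if_neg, (odd_two_mul_add_one j).neg_one_zpow]
    rw [Int.fract, hfl, not_lt, le_sub_iff_add_le, le_div_iff₀ h2T]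
    linarith [ht.1]

lemma sinh_neg_one_zpow_mul (k : ℤ) (y : ℝ) : sinh ((-1) ^ k * y) = (-1) ^ k * sinh y := by
  rcases k.even_or_odd with hk | hk <;> simp [hk.neg_one_zpow]

section Solutions

variable {m T : ℝ}

lemma sub_sq_le_mul_sinh_sub (x y : ℝ) : (x - y) ^ 2 ≤ (x - y) * (sinh x - sinh y) := by
  rcases le_total x y with h | h
  · have := sinh_sub_id_strictMono.monotone h
    nlinarith
  · have := sinh_sub_id_strictMono.monotone h
    nlinarith

lemma antitone_of_antitoneOn_Icc_int_mul (hT : 0 < T) {f : ℝ → ℝ}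
    (hf : ∀ n : ℤ, AntitoneOn f (Icc (n * T) ((n + 1) * T))) : Antitone f := by
  have hchain : ∀ (n : ℤ) (k : ℕ), AntitoneOn f (Icc (n * T) ((n + k) * T)) := by
    intro n k
    induction k with
    | zero => simp
    | succ k ih =>
      have hle : (n : ℝ) * T ≤ (n + k) * T := by nlinarith [k.cast_nonneg (α := ℝ)]
      have hstep := hf (n + k)
      push_cast at hstep ⊢
      rw [← add_assoc, ← Icc_union_Icc_eq_Icc hle (by nlinarith)]
      exact ih.union_right hstep (isGreatest_Icc hle) (isLeast_Icc (by nlinarith))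
  intro a b hab
  obtain ⟨n, hn⟩ : ∃ n : ℤ, n * T ≤ a := ⟨⌊a / T⌋, (floor_div_mul_mem_Ico hT a).1⟩
  obtain ⟨k, hk⟩ := exists_nat_ge (b / T - n)
  have hb : b ≤ (n + k) * T := by rw [← div_le_iff₀ hT]; linarith
  exact hchain n k ⟨hn, hab.trans hb⟩ ⟨hn.trans hab, hb⟩ hab

lemma antitone_of_hasDerivAt_nonpos_off_int_mul (hT : 0 < T) {f f' : ℝ → ℝ}
    (hf : Continuous f)
    (hf' : ∀ t, (∀ n : ℤ, t ≠ n * T) → HasDerivAt f (f' t) t ∧ f' t ≤ 0) :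
    Antitone f := by
  have hint : ∀ n : ℤ, ∀ t ∈ interior (Icc (n * T) ((n + 1) * T)),
      HasDerivAt f (f' t) t ∧ f' t ≤ 0 := fun n t ht =>
    hf' t (ne_int_mul_of_mem_Ioo hT (by rwa [interior_Icc] at ht))
  exact antitone_of_antitoneOn_Icc_int_mul hT fun n =>
    antitoneOn_of_deriv_nonpos (convex_Icc _ _) hf.continuousOn
      (fun t ht => (hint n t ht).1.differentiableAt.differentiableWithinAt)
      fun t ht => (hint n t ht).1.deriv ▸ (hint n t ht).2

lemma isSolF_antiperiodicExtension_plusFlow (hm : 0 < m) (hT : 0 < T) {v : ℝ}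
    (hv : v ≤ arsinh (1 / m)) (hvT : plusFlow m v T = -v) :
    IsSolF m T (antiperiodicExtension T (plusFlow m v)) := by
  refine ⟨continuous_antiperiodicExtension hT
    (fun τ hτ => (hasDerivAt_plusFlow hm hv hτ.1).continuousAt) (by rw [hvT, plusFlow_zero]),
    fun t ht => ?_⟩
  have hIco := floor_div_mul_mem_Ico hT t
  have hIoo : t ∈ Ioo (⌊t / T⌋ * T) ((⌊t / T⌋ + 1) * T) :=
    ⟨hIco.1.lt_of_ne (ht _).symm, hIco.2⟩
  refine (hasDerivAt_antiperiodicExtension hT hIoo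
    (hasDerivAt_plusFlow hm hv (sub_nonneg.2 hIco.1))).congr_deriv ?_
  rw [squareWave_eq_neg_one_zpow hT hIco, antiperiodicExtension_eq_of_mem_Ico hT hIco,
    sinh_neg_one_zpow_mul]
  ring

lemma antiperiodicExtension_plusFlow_mem_Icc (hm : 0 < m) (hT : 0 < T) {v : ℝ}
    (hv : v ∈ Icc (-arsinh (1 / m)) (arsinh (1 / m))) (t : ℝ) :
    antiperiodicExtension T (plusFlow m v) t ∈ Icc (-arsinh (1 / m)) (arsinh (1 / m)) := by
  have hIco := floor_div_mul_mem_Ico hT t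
  have hflow := plusFlow_mem_Icc hm hv.2 (sub_nonneg.2 hIco.1)
  rw [antiperiodicExtension_eq_of_mem_Ico hT hIco, mem_Icc, ← abs_le, abs_mul, abs_neg_one_zpow,
    one_mul, abs_le]
  exact ⟨hv.1.trans hflow.1, hflow.2⟩

variable {V W : ℝ → ℝ}

lemma IsSolF.antitone_exp_mul_sub_sq (hm : 0 ≤ m) (hT : 0 < T) (hV : IsSolF m T V)
    (hW : IsSolF m T W) : Antitone fun t => exp (4 * m * t) * (V t - W t) ^ 2 := by
  refine antitone_of_hasDerivAt_nonpos_off_int_mul hT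
    (f' := fun t => 4 * m * exp (4 * m * t) *
      ((V t - W t) ^ 2 - (V t - W t) * (sinh (V t) - sinh (W t))))
    (by have := hV.1; have := hW.1; fun_prop) fun t ht => ⟨?_, ?_⟩
  · have hexp := ((hasDerivAt_id' t).const_mul (4 * m)).exp
    refine (hexp.fun_mul (((hV.2 t ht).fun_sub (hW.2 t ht)).fun_pow 2)).congr_deriv ?_
    ring
  · exact mul_nonpos_of_nonneg_of_nonpos (by positivity)
      (sub_nonpos.2 (sub_sq_le_mul_sinh_sub _ _))

lemma IsSolF.sub_sq_le_exp_mul (hm : 0 ≤ m) (hT : 0 < T) (hV : IsSolF m T V)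
    (hW : IsSolF m T W) {s t : ℝ} (hst : s ≤ t) :
    (V t - W t) ^ 2 ≤ exp (-(4 * m * (t - s))) * (V s - W s) ^ 2 := by
  have h := hV.antitone_exp_mul_sub_sq hm hT hW hst
  rw [show -(4 * m * (t - s)) = 4 * m * s - 4 * m * t by ring, exp_sub, div_mul_eq_mul_div,
    le_div_iff₀ (exp_pos _)]
  linarith

lemma IsSolF.eq_of_periodic (hm : 0 < m) (hT : 0 < T) (hV : IsSolF m T V) (hW : IsSolF m T W)
    (hVp : Function.Periodic V (2 * T)) (hWp : Function.Periodic W (2 * T)) : V = W := by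
  funext t
  have h := hV.sub_sq_le_exp_mul hm.le hT hW (s := t)
    (le_add_of_nonneg_right (by positivity : 0 ≤ 2 * T))
  rw [hVp, hWp, add_sub_cancel_left] at h
  have hlt : exp (-(4 * m * (2 * T))) < 1 := exp_lt_one_iff.2 (by nlinarith)
  have hsq : (V t - W t) ^ 2 = 0 := by nlinarith [sq_nonneg (V t - W t)]
  exact sub_eq_zero.1 (pow_eq_zero_iff two_ne_zero |>.1 hsq)

lemma IsSolF.tendsto_sub (hm : 0 < m) (hT : 0 < T) (hV : IsSolF m T V) (hW : IsSolF m T W) :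
    Tendsto (fun t => V t - W t) atTop (𝓝 0) := by
  have hexp : Tendsto (fun t => exp (-(4 * m * (t - 0)))) atTop (𝓝 0) := by
    refine (tendsto_exp_neg_atTop_nhds_zero.comp
      (tendsto_id.const_mul_atTop (by positivity : 0 < 4 * m))).congr fun t => ?_
    simp
  have hbound := (hexp.mul_const ((V 0 - W 0) ^ 2)).sqrt
  rw [zero_mul, sqrt_zero] at hbound
  refine squeeze_zero_norm' ?_ hbound
  filter_upwards [eventually_ge_atTop 0] with t ht
  exact abs_le_sqrt (hV.sub_sq_le_exp_mul hm.le hT hW ht)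

end Solutions

theorem statement0 (m T : ℝ) (hm : 0 < m) (hT : 0 < T) :
    ∃ P : ℝ → ℝ,
      (IsSolF m T P ∧ Function.Periodic P (2 * T)) ∧
      (∀ Q : ℝ → ℝ, IsSolF m T Q → Function.Periodic Q (2 * T) → Q = P) ∧
      (∀ V : ℝ → ℝ, IsSolF m T V →
        Filter.Tendsto (fun t => V t - P t) Filter.atTop (nhds 0)) ∧
      (∀ t : ℝ, P t ∈ Set.Icc (-Real.arsinh (1 / m)) (Real.arsinh (1 / m))) ∧
      sInf (Set.range P) = -sSup (Set.range P) := by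
  obtain ⟨v, hv, hvT⟩ := exists_plusFlow_eq_neg hm hT.le
  have hv' : v ∈ Icc (-arsinh (1 / m)) (arsinh (1 / m)) :=
    ⟨hv.1, hv.2.trans (arsinh_nonneg_iff.2 (by positivity))⟩
  have hP := isSolF_antiperiodicExtension_plusFlow hm hT hv'.2 hvT
  have hanti := antiperiodicExtension_antiperiodic (g := plusFlow m v) hT.ne'
  exact ⟨_, ⟨hP, hanti.periodic_two_mul⟩,
    fun Q hQ hQp => hQ.eq_of_periodic hm hT hP hQp hanti.periodic_two_mul,
    fun V hV => hV.tendsto_sub hm hT hP,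
    antiperiodicExtension_plusFlow_mem_Icc hm hT hv',
    hanti.sInf_range_eq_neg_sSup⟩
end

section
/- Let 0 < ε ≤ 1, m > 0, T > 0, and let P_{m,T} be the unique 2T-periodic solution of the switched system F(m,T). Define Δ(ε,m,T) = (1/(2T)) ∫₀^{2T} 2(m·cosh(P_{m,T}(s)) − m − ε) ds. Then for every solution (x₁, x₂) of the system Σ(ε,m,T) with x₁(0) > 0 and x₂(0) > 0, one has lim_{t→∞} (ln(x₁(t)) + ln(x₂(t)))/t = Δ(ε,m,T). -/
open Real Filter Set

/-- The quantity `Δ(ε,m,T)` associated with the periodic solution `P` of `F(m,T)`. -/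
noncomputable def DeltaP (ε m T : ℝ) (P : ℝ → ℝ) : ℝ :=
  (1 / (2 * T)) * ∫ s in (0:ℝ)..(2 * T), 2 * (m * Real.cosh (P s) - m - ε)

/-- A solution of the planar switched linear system `Σ(ε,m,T)`. -/
def IsSolSigma (ε m T : ℝ) (x₁ x₂ : ℝ → ℝ) : Prop :=
  Continuous x₁ ∧ Continuous x₂ ∧ ∀ t : ℝ, (∀ n : ℤ, t ≠ n * T) →
    HasDerivAt x₁ ((squareWave T t - ε) * x₁ t + m * (x₂ t - x₁ t)) t ∧
    HasDerivAt x₂ ((-squareWave T t - ε) * x₂ t + m * (x₁ t - x₂ t)) t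

/-!
The system is cooperative, so positivity persists: while both coordinates are nonnegative,
`e^{(1 + ε + m) t} xᵢ(t)` is nondecreasing. For positive solutions `V = log x₁ - log x₂` solves
`F(m,T)` and `(log x₁ + log x₂)' = 2 (m cosh V - m - ε)`. Because `sinh` is expanding,
`e^{4mt} (V - P)²` is nonincreasing, so `V - P = O(e^{-2mt})`; hence the integral of
`2 (m cosh V - m - ε)` over `[0, t]` stays within a bounded distance of that of
`2 (m cosh P - m - ε)`, which by periodicity is `Δ t + O(1)`.
-/

open MeasureTheory intervalIntegral

theorem le_of_hasDerivAt_nonneg_off_countable {f f' : ℝ → ℝ} {a b : ℝ} {s : Set ℝ}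
    (hab : a ≤ b) (hs : s.Countable) (hc : ContinuousOn f (Icc a b))
    (hd : ∀ x ∈ Ioo a b \ s, HasDerivAt f (f' x) x) (hi : IntervalIntegrable f' volume a b)
    (hf' : ∀ x ∈ Icc a b, 0 ≤ f' x) : f a ≤ f b := by
  have := integral_nonneg (μ := volume) hab hf'
  rw [integral_eq_of_hasDerivAt_off_countable_of_le f f' hab hs hc hd hi] at this
  linarith

theorem pos_of_nonneg_on_Icc_imp_pos {h : ℝ → ℝ} (hc : Continuous h) (h0 : 0 < h 0)
    (step : ∀ t > 0, (∀ s ∈ Icc 0 t, 0 ≤ h s) → 0 < h t) {t : ℝ} (ht : 0 ≤ t) : 0 < h t := by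
  by_contra! hneg
  set Z := Ici 0 ∩ h ⁻¹' Iic 0
  have hZ : IsClosed Z := isClosed_Ici.inter (isClosed_Iic.preimage hc)
  have hbdd : BddBelow Z := ⟨0, fun _ hz => hz.1⟩
  have hfirst : sInf Z ∈ Z := hZ.csInf_mem ⟨t, ht, hneg⟩ hbdd
  have hbefore : ∀ s ∈ Ico 0 (sInf Z), 0 < h s := fun s hs =>
    not_le.1 fun hle => (csInf_le hbdd ⟨hs.1, hle⟩).not_gt hs.2
  have hpos : 0 < sInf Z :=
    hfirst.1.lt_of_ne fun h' => (h0.trans_le (h' ▸ hfirst.2 : h 0 ≤ 0)).false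
  refine (step _ hpos fun s hs => ?_).not_ge hfirst.2
  have hcl : Icc 0 (sInf Z) ⊆ closure (Ico 0 (sInf Z)) := by rw [closure_Ico hpos.ne]
  exact closure_minimal (fun x hx => (hbefore x hx).le) (isClosed_Ici.preimage hc) (hcl hs)

theorem le_exp_mul_of_hasDerivAt_cooperative {x y a : ℝ → ℝ} {C m t : ℝ} {s : Set ℝ}
    (ht : 0 ≤ t) (hs : s.Countable) (hm : 0 ≤ m) (hxc : Continuous x) (hyc : Continuous y)
    (hx : ∀ τ ∈ Ioo 0 t \ s, HasDerivAt x (a τ * x τ + m * y τ) τ)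
    (hi : IntervalIntegrable (fun τ => a τ * x τ) volume 0 t) (ha : ∀ τ, -C ≤ a τ)
    (hx0 : ∀ τ ∈ Icc 0 t, 0 ≤ x τ) (hy0 : ∀ τ ∈ Icc 0 t, 0 ≤ y τ) :
    x 0 ≤ exp (C * t) * x t := by
  have hexp : Continuous fun τ => exp (C * τ) := continuous_exp.comp (continuous_const_mul C)
  have key := le_of_hasDerivAt_nonneg_off_countable (f := fun τ => exp (C * τ) * x τ)
    (f' := fun τ => exp (C * τ) * (a τ * x τ) + exp (C * τ) * (C * x τ + m * y τ)) ht hs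
    (hexp.mul hxc).continuousOn ?_ ?_ ?_
  · simpa using key
  · intro τ hτ
    refine ((((hasDerivAt_id τ).const_mul C).exp).fun_mul (hx τ hτ)).congr_deriv ?_
    simp only [id]
    ring
  · have hrest : Continuous fun τ => exp (C * τ) * (C * x τ + m * y τ) := by fun_prop
    exact (hi.continuousOn_mul hexp.continuousOn).add (hrest.intervalIntegrable _ _)
  · intro τ hτ
    have h₁ : 0 ≤ (a τ + C) * x τ := mul_nonneg (by linarith [ha τ]) (hx0 τ hτ)
    have h₂ : 0 ≤ m * y τ := mul_nonneg hm (hy0 τ hτ)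
    rw [← mul_add]
    exact mul_nonneg (exp_pos _).le (by linarith)

theorem abs_cosh_sub_cosh_le {M a b : ℝ} (ha : |a| ≤ M) (hb : |b| ≤ M) :
    |cosh a - cosh b| ≤ sinh M * |a - b| := by
  have hsub : ∀ x ∈ Icc (-M) M, |sinh x| ≤ sinh M := fun x hx => by
    rw [abs_sinh]; exact sinh_le_sinh.2 (abs_le.2 hx)
  simpa using Convex.norm_image_sub_le_of_norm_hasDerivWithin_le
    (fun x _ => (hasDerivAt_cosh x).hasDerivWithinAt) hsub (convex_Icc (-M) M)
    (abs_le.1 hb) (abs_le.1 ha)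

theorem sq_sub_le_mul_sinh_sub_sinh (a b : ℝ) : (a - b) ^ 2 ≤ (a - b) * (sinh a - sinh b) := by
  have key : 0 ≤ (a - b) * ((sinh a - a) - (sinh b - b)) := by
    rcases le_total a b with hab | hab
    · exact mul_nonneg_of_nonpos_of_nonpos (by linarith)
        (by linarith [sinh_sub_id_strictMono.monotone hab])
    · exact mul_nonneg (by linarith) (by linarith [sinh_sub_id_strictMono.monotone hab])
  nlinarith

theorem exp_mul_sq_sub_le_of_hasDerivAt_sinh {u V W : ℝ → ℝ} {m : ℝ} {s : Set ℝ}
    (hm : 0 ≤ m) (hs : s.Countable) (hVc : ContinuousOn V (Ici 0)) (hWc : ContinuousOn W (Ici 0))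
    (hV : ∀ t ∈ Ioi 0 \ s, HasDerivAt V (2 * (u t - m * sinh (V t))) t)
    (hW : ∀ t ∈ Ioi 0 \ s, HasDerivAt W (2 * (u t - m * sinh (W t))) t)
    {t : ℝ} (ht : 0 ≤ t) : exp (4 * m * t) * (V t - W t) ^ 2 ≤ (V 0 - W 0) ^ 2 := by
  set D := fun x => V x - W x
  set E' := fun x => exp (4 * m * x) * (4 * m * (D x ^ 2 - D x * (sinh (V x) - sinh (W x))))
  have hexp : Continuous fun x => exp (4 * m * x) := by fun_prop
  have hDc : ContinuousOn D (Ici 0) := hVc.sub hWc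
  have hE'c : ContinuousOn E' (Ici 0) := by
    have := (continuous_sinh.comp_continuousOn hVc).sub (continuous_sinh.comp_continuousOn hWc)
    exact hexp.continuousOn.mul (continuousOn_const.mul ((hDc.pow 2).sub (hDc.mul this)))
  have hmono := le_of_hasDerivAt_nonneg_off_countable
    (f := fun x => -(exp (4 * m * x) * D x ^ 2)) (f' := fun x => -E' x) ht hs
    ((hexp.continuousOn.mul (hDc.pow 2)).neg.mono Icc_subset_Ici_self)
    (fun x ⟨hx, hxs⟩ => by
      have hD := ((hV x ⟨hx.1, hxs⟩).fun_sub (hW x ⟨hx.1, hxs⟩)).fun_pow 2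
      refine ((((hasDerivAt_id x).const_mul (4 * m)).exp.fun_mul hD).fun_neg).congr_deriv ?_
      simp only [E', D, id]
      push_cast
      ring)
    ((hE'c.neg.mono (by rw [uIcc_of_le ht]; exact Icc_subset_Ici_self)).intervalIntegrable)
    (fun x _ => by
      have := sq_sub_le_mul_sinh_sub_sinh (V x) (W x)
      have : 0 ≤ exp (4 * m * x) * (4 * m) := by positivity
      simp only [E', D]
      nlinarith)
  simpa using hmono

theorem abs_sub_le_exp_mul_of_hasDerivAt_sinh {u V W : ℝ → ℝ} {m : ℝ} {s : Set ℝ}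
    (hm : 0 ≤ m) (hs : s.Countable) (hVc : ContinuousOn V (Ici 0)) (hWc : ContinuousOn W (Ici 0))
    (hV : ∀ t ∈ Ioi 0 \ s, HasDerivAt V (2 * (u t - m * sinh (V t))) t)
    (hW : ∀ t ∈ Ioi 0 \ s, HasDerivAt W (2 * (u t - m * sinh (W t))) t)
    {t : ℝ} (ht : 0 ≤ t) : |V t - W t| ≤ exp (-(2 * m) * t) * |V 0 - W 0| := by
  have hsq : (V t - W t) ^ 2 ≤ (exp (-(2 * m) * t) * |V 0 - W 0|) ^ 2 :=
    calc (V t - W t) ^ 2 = exp (-(4 * m * t)) * (exp (4 * m * t) * (V t - W t) ^ 2) := by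
          rw [← mul_assoc, ← exp_add, neg_add_cancel, exp_zero, one_mul]
      _ ≤ exp (-(4 * m * t)) * (V 0 - W 0) ^ 2 := by
          gcongr
          exact exp_mul_sq_sub_le_of_hasDerivAt_sinh hm hs hVc hWc hV hW ht
      _ = (exp (-(2 * m) * t) * |V 0 - W 0|) ^ 2 := by
          rw [mul_pow, sq_abs, ← exp_nat_mul]
          ring_nf
  simpa [abs_of_nonneg (by positivity : 0 ≤ exp (-(2 * m) * t) * |V 0 - W 0|)]
    using sq_le_sq.1 hsq

theorem integral_exp_neg_mul_le {c : ℝ} (hc : 0 < c) {t : ℝ} :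
    ∫ s in (0:ℝ)..t, exp (-c * s) ≤ 1 / c := by
  have := integral_comp_mul_left (a := 0) (b := t) exp (neg_ne_zero.2 hc.ne')
  simp only [mul_zero] at this
  rw [this, integral_exp, smul_eq_mul, exp_zero, inv_neg, neg_mul, ← mul_neg, neg_sub, one_div]
  exact mul_le_of_le_one_right (inv_nonneg.2 hc.le) (by linarith [exp_pos (-c * t)])

theorem abs_integral_sub_integral_le_of_abs_sub_le_exp {f h : ℝ → ℝ} {K c t : ℝ} (hc : 0 < c)
    (ht : 0 ≤ t) (hf : IntervalIntegrable f volume 0 t) (hh : IntervalIntegrable h volume 0 t)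
    (hK : ∀ s ∈ Icc 0 t, |f s - h s| ≤ K * exp (-c * s)) :
    |(∫ s in 0..t, f s) - ∫ s in 0..t, h s| ≤ K / c := by
  have hK0 : 0 ≤ K := by simpa using (abs_nonneg _).trans (hK 0 ⟨le_rfl, ht⟩)
  rw [← integral_sub hf hh]
  calc |∫ s in 0..t, (f s - h s)| ≤ ∫ s in 0..t, |f s - h s| := abs_integral_le_integral_abs ht
    _ ≤ ∫ s in 0..t, K * exp (-c * s) :=
        integral_mono_on ht (hf.sub hh).abs
          ((continuous_exp.comp (continuous_const_mul _)).intervalIntegrable _ _ |>.const_mul K) hK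
    _ ≤ K / c := by
        rw [intervalIntegral.integral_const_mul, div_eq_mul_one_div]
        exact mul_le_mul_of_nonneg_left (integral_exp_neg_mul_le hc) hK0

theorem abs_integral_sub_integral_cosh_le {V P : ℝ → ℝ} {m ε c M : ℝ} (hm : 0 < m)
    (hV : ContinuousOn V (Ici 0)) (hP : Continuous P) (hPM : ∀ s, |P s| ≤ M)
    (hdecay : ∀ s, 0 ≤ s → |V s - P s| ≤ exp (-(2 * m) * s) * c) {t : ℝ} (ht : 0 ≤ t) :
    |(∫ s in 0..t, 2 * (m * cosh (V s) - m - ε)) - ∫ s in 0..t, 2 * (m * cosh (P s) - m - ε)|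
      ≤ sinh (M + c) * c := by
  have hc : 0 ≤ c := by simpa using (abs_nonneg _).trans (hdecay 0 le_rfl)
  have hVM : ∀ s, 0 ≤ s → |V s| ≤ M + c := fun s hs => by
    have : exp (-(2 * m) * s) ≤ 1 := exp_le_one_iff.2 (by nlinarith)
    calc |V s| ≤ |V s - P s| + |P s| := by simpa using abs_add_le (V s - P s) (P s)
      _ ≤ c + M := add_le_add ((hdecay s hs).trans (mul_le_of_le_one_left hc this)) (hPM s)
      _ = M + c := add_comm c M
  have hIcc : uIcc 0 t ⊆ Ici 0 := by rw [uIcc_of_le ht]; exact Icc_subset_Ici_self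
  have hg : Continuous fun v => 2 * (m * cosh v - m - ε) := by fun_prop
  have hpointwise : ∀ s ∈ Icc 0 t,
      |2 * (m * cosh (V s) - m - ε) - 2 * (m * cosh (P s) - m - ε)|
        ≤ 2 * m * (sinh (M + c) * c) * exp (-(2 * m) * s) := fun s hs => by
    have hlip := abs_cosh_sub_cosh_le (hVM s hs.1) ((hPM s).trans (le_add_of_nonneg_right hc))
    have hsinh : 0 ≤ sinh (M + c) := sinh_nonneg_iff.2 ((abs_nonneg _).trans (hVM s hs.1))
    calc |2 * (m * cosh (V s) - m - ε) - 2 * (m * cosh (P s) - m - ε)|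
        = 2 * m * |cosh (V s) - cosh (P s)| := by
          rw [show ∀ a b : ℝ, 2 * (m * a - m - ε) - 2 * (m * b - m - ε) = 2 * m * (a - b) by
            intros; ring, abs_mul, abs_of_pos (by positivity : 0 < 2 * m)]
      _ ≤ 2 * m * (sinh (M + c) * (exp (-(2 * m) * s) * c)) := by
          gcongr
          exact hlip.trans (mul_le_mul_of_nonneg_left (hdecay s hs.1) hsinh)
      _ = 2 * m * (sinh (M + c) * c) * exp (-(2 * m) * s) := by ring
  calc _ ≤ 2 * m * (sinh (M + c) * c) / (2 * m) :=
        abs_integral_sub_integral_le_of_abs_sub_le_exp (by positivity) ht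
          ((hg.comp_continuousOn hV).mono hIcc).intervalIntegrable
          ((hg.comp hP).intervalIntegrable _ _) hpointwise
    _ = sinh (M + c) * c := by field_simp

theorem tendsto_div_atTop_of_abs_sub_mul_le {f : ℝ → ℝ} {c B : ℝ}
    (hf : ∀ᶠ t in atTop, |f t - c * t| ≤ B) : Tendsto (fun t => f t / t) atTop (nhds c) := by
  have hsmall : Tendsto (fun t => (f t - c * t) / t) atTop (nhds 0) := by
    refine squeeze_zero_norm' ?_ ((tendsto_const_nhds (x := B)).div_atTop tendsto_id)
    filter_upwards [hf, eventually_gt_atTop 0] with t hB ht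
    rw [norm_div, Real.norm_of_nonneg ht.le]
    exact div_le_div_of_nonneg_right hB ht.le
  rw [← zero_add c]
  refine (hsmall.add_const c).congr' ?_
  filter_upwards [eventually_ne_atTop 0] with t ht
  field_simp
  ring

theorem Function.Periodic.exists_abs_intervalIntegral_sub_mul_le {g : ℝ → ℝ} {T : ℝ}
    (hg : Function.Periodic g T) (hT : 0 < T) (hi : IntervalIntegrable g volume 0 T) :
    ∃ C, ∀ t, |(∫ x in 0..t, g x) - (∫ x in 0..T, g x) / T * t| ≤ C := by
  have hlow := hg.sInf_add_zsmul_le_integral_of_pos hi hT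
  have hup := hg.integral_le_sSup_add_zsmul_of_pos hi hT
  simp only [zsmul_eq_mul] at hlow hup
  set I := ∫ x in 0..T, g x
  set A := sInf ((fun t => ∫ x in 0..t, g x) '' Icc 0 T)
  set B := sSup ((fun t => ∫ x in 0..t, g x) '' Icc 0 T)
  refine ⟨|A| + |B| + |I|, fun t => ?_⟩
  have hfloor : |I / T * t - ⌊t / T⌋ * I| ≤ |I| := by
    have h₁ := Int.floor_le (t / T)
    have h₂ := Int.lt_floor_add_one (t / T)
    rw [show I / T * t - ⌊t / T⌋ * I = I * (t / T - ⌊t / T⌋) by ring, abs_mul]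
    exact mul_le_of_le_one_right (abs_nonneg I) (abs_le.2 ⟨by linarith, by linarith⟩)
  rw [abs_le] at hfloor ⊢
  constructor <;> linarith [hfloor.1, hfloor.2, hlow t, hup t, neg_abs_le A, le_abs_self B,
    abs_nonneg A, abs_nonneg B]

theorem abs_squareWave_le_one (T t : ℝ) : |squareWave T t| ≤ 1 := by
  unfold squareWave; split <;> norm_num

theorem intervalIntegrable_squareWave (T a b : ℝ) :
    IntervalIntegrable (squareWave T) volume a b := by
  have hmeas : Measurable (squareWave T) :=
    Measurable.ite (measurableSet_lt (measurable_id.div_const _).fract measurable_const)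
      measurable_const measurable_const
  rw [intervalIntegrable_iff]
  exact Measure.integrableOn_of_bounded (M := 1) measure_Ioc_lt_top.ne
    hmeas.aestronglyMeasurable (Eventually.of_forall (abs_squareWave_le_one T))

def switchingTimes (T : ℝ) : Set ℝ := range fun n : ℤ => (n : ℝ) * T

theorem countable_switchingTimes (T : ℝ) : (switchingTimes T).Countable := countable_range _

theorem ne_intCast_mul_of_notMem_switchingTimes {T t : ℝ} (h : t ∉ switchingTimes T) (n : ℤ) :
    t ≠ n * T := fun hn => h ⟨n, hn.symm⟩

section IsSolSigma

variable {ε m T : ℝ} {x₁ x₂ : ℝ → ℝ}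

theorem IsSolSigma.pos (hx : IsSolSigma ε m T x₁ x₂) (hm : 0 ≤ m)
    (h₁ : 0 < x₁ 0) (h₂ : 0 < x₂ 0) {t : ℝ} (ht : 0 ≤ t) : 0 < x₁ t ∧ 0 < x₂ t := by
  obtain ⟨hc₁, hc₂, hd⟩ := hx
  have hmin : 0 < min (x₁ t) (x₂ t) := by
    refine pos_of_nonneg_on_Icc_imp_pos (h := fun t => min (x₁ t) (x₂ t)) (hc₁.min hc₂)
      (lt_min h₁ h₂) (fun t ht hnonneg => ?_) ht
    have hx₁ : ∀ τ ∈ Icc 0 t, 0 ≤ x₁ τ := fun τ hτ => (le_min_iff.1 (hnonneg τ hτ)).1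
    have hx₂ : ∀ τ ∈ Icc 0 t, 0 ≤ x₂ τ := fun τ hτ => (le_min_iff.1 (hnonneg τ hτ)).2
    have hsw : ∀ τ, -1 ≤ squareWave T τ ∧ squareWave T τ ≤ 1 :=
      fun τ => abs_le.1 (abs_squareWave_le_one T τ)
    have hgrow₁ := le_exp_mul_of_hasDerivAt_cooperative (C := 1 + ε + m)
      (a := fun τ => squareWave T τ - ε - m) ht.le (countable_switchingTimes T) hm hc₁ hc₂
      (fun τ hτ => ((hd τ (ne_intCast_mul_of_notMem_switchingTimes hτ.2)).1).congr_deriv (by ring))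
      (((intervalIntegrable_squareWave T 0 t).sub intervalIntegrable_const).sub
        intervalIntegrable_const |>.mul_continuousOn hc₁.continuousOn)
      (fun τ => by linarith [hsw τ]) hx₁ hx₂
    have hgrow₂ := le_exp_mul_of_hasDerivAt_cooperative (C := 1 + ε + m)
      (a := fun τ => -squareWave T τ - ε - m) ht.le (countable_switchingTimes T) hm hc₂ hc₁
      (fun τ hτ => ((hd τ (ne_intCast_mul_of_notMem_switchingTimes hτ.2)).2).congr_deriv (by ring))
      (((intervalIntegrable_squareWave T 0 t).neg.sub intervalIntegrable_const).sub
        intervalIntegrable_const |>.mul_continuousOn hc₂.continuousOn)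
      (fun τ => by linarith [hsw τ]) hx₂ hx₁
    exact lt_min (pos_of_mul_pos_right (h₁.trans_le hgrow₁) (exp_pos _).le)
      (pos_of_mul_pos_right (h₂.trans_le hgrow₂) (exp_pos _).le)
  exact lt_min_iff.1 hmin

theorem IsSolSigma.hasDerivAt_log (hx : IsSolSigma ε m T x₁ x₂)
    {t : ℝ} (ht : t ∉ switchingTimes T) (h₁ : 0 < x₁ t) (h₂ : 0 < x₂ t) :
    HasDerivAt (fun τ => log (x₁ τ) - log (x₂ τ))
        (2 * (squareWave T t - m * sinh (log (x₁ t) - log (x₂ t)))) t ∧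
      HasDerivAt (fun τ => log (x₁ τ) + log (x₂ τ))
        (2 * (m * cosh (log (x₁ t) - log (x₂ t)) - m - ε)) t := by
  obtain ⟨hd₁, hd₂⟩ := hx.2.2 t (ne_intCast_mul_of_notMem_switchingTimes ht)
  rw [← log_div h₁.ne' h₂.ne', sinh_log (div_pos h₁ h₂), cosh_log (div_pos h₁ h₂)]
  constructor
  · refine ((hd₁.log h₁.ne').fun_sub (hd₂.log h₂.ne')).congr_deriv ?_
    field_simp
    ring
  · refine ((hd₁.log h₁.ne').fun_add (hd₂.log h₂.ne')).congr_deriv ?_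
    field_simp
    ring

theorem IsSolSigma.continuousOn_log (hx : IsSolSigma ε m T x₁ x₂)
    (hpos : ∀ t, 0 ≤ t → 0 < x₁ t ∧ 0 < x₂ t) :
    ContinuousOn (fun τ => log (x₁ τ)) (Ici 0) ∧ ContinuousOn (fun τ => log (x₂ τ)) (Ici 0) :=
  ⟨hx.1.continuousOn.log fun τ hτ => (hpos τ hτ).1.ne',
    hx.2.1.continuousOn.log fun τ hτ => (hpos τ hτ).2.ne'⟩

theorem IsSolSigma.log_add_log_eq (hx : IsSolSigma ε m T x₁ x₂)
    (hpos : ∀ t, 0 ≤ t → 0 < x₁ t ∧ 0 < x₂ t) {t : ℝ} (ht : 0 ≤ t) :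
    log (x₁ t) + log (x₂ t) = log (x₁ 0) + log (x₂ 0) +
      ∫ s in 0..t, 2 * (m * cosh (log (x₁ s) - log (x₂ s)) - m - ε) := by
  obtain ⟨hlog₁, hlog₂⟩ := hx.continuousOn_log hpos
  have hIcc : uIcc 0 t ⊆ Ici 0 := by rw [uIcc_of_le ht]; exact Icc_subset_Ici_self
  have hrate : ContinuousOn (fun s => 2 * (m * cosh (log (x₁ s) - log (x₂ s)) - m - ε)) (Ici 0) :=
    (show Continuous fun v => 2 * (m * cosh v - m - ε) by fun_prop).comp_continuousOn
      (hlog₁.sub hlog₂)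
  rw [integral_eq_of_hasDerivAt_off_countable_of_le _ _ ht (countable_switchingTimes T)
    ((hlog₁.add hlog₂).mono Icc_subset_Ici_self)
    (fun τ hτ => (hx.hasDerivAt_log hτ.2 (hpos τ hτ.1.1.le).1 (hpos τ hτ.1.1.le).2).2)
    (hrate.mono hIcc).intervalIntegrable]
  simp only [Pi.add_apply]
  ring

end IsSolSigma

theorem statement5_general (ε m T : ℝ) (hm : 0 < m) (hT : 0 < T)
    (P : ℝ → ℝ) (hP : IsSolF m T P) (hPper : Function.Periodic P (2 * T))
    (x₁ x₂ : ℝ → ℝ) (hx : IsSolSigma ε m T x₁ x₂)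
    (h₁ : 0 < x₁ 0) (h₂ : 0 < x₂ 0) :
    Filter.Tendsto (fun t => (Real.log (x₁ t) + Real.log (x₂ t)) / t)
      Filter.atTop (nhds (DeltaP ε m T P)) := by
  have hpos : ∀ t, 0 ≤ t → 0 < x₁ t ∧ 0 < x₂ t := fun t ht => hx.pos hm.le h₁ h₂ ht
  set V := fun t => log (x₁ t) - log (x₂ t)
  have hVc : ContinuousOn V (Ici 0) :=
    (hx.continuousOn_log hpos).1.sub (hx.continuousOn_log hpos).2
  have hdecay : ∀ s, 0 ≤ s → |V s - P s| ≤ exp (-(2 * m) * s) * |V 0 - P 0| :=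
    fun s => abs_sub_le_exp_mul_of_hasDerivAt_sinh hm.le (countable_switchingTimes T) hVc
      hP.1.continuousOn
      (fun τ hτ => (hx.hasDerivAt_log hτ.2 (hpos τ hτ.1.le).1 (hpos τ hτ.1.le).2).1)
      (fun τ hτ => hP.2 τ (ne_intCast_mul_of_notMem_switchingTimes hτ.2))
  obtain ⟨M, hM⟩ := (hPper.isBounded_of_continuous (by positivity) hP.1).exists_norm_le
  obtain ⟨C, hC⟩ := (hPper.comp fun v => 2 * (m * cosh v - m - ε))
    |>.exists_abs_intervalIntegral_sub_mul_le (by positivity)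
      (Continuous.intervalIntegrable (by have := hP.1; fun_prop) _ _)
  refine tendsto_div_atTop_of_abs_sub_mul_le
    (B := |log (x₁ 0) + log (x₂ 0)| + sinh (M + |V 0 - P 0|) * |V 0 - P 0| + C) ?_
  filter_upwards [eventually_ge_atTop 0] with t ht
  have hgap := abs_integral_sub_integral_cosh_le (ε := ε) hm hVc hP.1
    (fun s => hM _ ⟨s, rfl⟩) hdecay ht
  have hperiodic := hC t
  simp only [Function.comp_apply, V] at hgap hperiodic ⊢
  rw [hx.log_add_log_eq hpos ht, DeltaP, one_div_mul_eq_div]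
  rw [abs_le] at hgap hperiodic ⊢
  constructor <;> linarith [neg_abs_le (log (x₁ 0) + log (x₂ 0)),
    le_abs_self (log (x₁ 0) + log (x₂ 0))]

theorem statement5 (ε m T : ℝ) (hε : 0 < ε) (hε1 : ε ≤ 1) (hm : 0 < m) (hT : 0 < T)
    (P : ℝ → ℝ) (hP : IsSolF m T P) (hPper : Function.Periodic P (2 * T))
    (x₁ x₂ : ℝ → ℝ) (hx : IsSolSigma ε m T x₁ x₂)
    (h₁ : 0 < x₁ 0) (h₂ : 0 < x₂ 0) :
    Filter.Tendsto (fun t => (Real.log (x₁ t) + Real.log (x₂ t)) / t)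
      Filter.atTop (nhds (DeltaP ε m T P)) :=
  statement5_general ε m T hm hT P hP hPper x₁ x₂ hx h₁ h₂
end

section
/- Let 0 < ε ≤ 1, m > 0, T > 0, and let P^+_{m,T} be the maximum value of the unique 2T-periodic solution of the switched system F(m,T). Then Δ(ε,m,T) = (1/T)·ln((1 + m·sinh(P^+_{m,T}))/(1 − m·sinh(P^+_{m,T}))) − 2(m + ε). -/
open Real Filter Set

/-!
Along a solution on `(0, T)`, where `u = 1`, the quantity `g = 1 - m sinh P` solves the linear
equation `g' = -(2 m cosh P) g`, so `g T = g 0 · exp (-∫₀ᵀ 2 m cosh P)`. Two `2T`-periodic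
solutions have a nonincreasing, periodic, hence constant squared difference, which forces them
to agree; since `-P (· + T)` is again a periodic solution, `P` is `T`-antiperiodic. Then
`g 0 = 1 + m sinh (P T)`, so the linear equation yields
`∫₀ᵀ 2 m cosh P = log ((1 + m sinh (P T)) / (1 - m sinh (P T)))`, and `g > 0` on `[0, T]`:
`P` increases there and, by antiperiodicity, attains its maximum at `T`.
-/
theorem antitone_of_hasDerivAt_nonpos_off_countable {f f' : ℝ → ℝ} {s : Set ℝ}
    (hs : s.Countable) (hf : Continuous f) (hf' : Continuous f')
    (hderiv : ∀ x ∉ s, HasDerivAt f (f' x) x) (hnonpos : ∀ x, f' x ≤ 0) : Antitone f := by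
  intro a b hab
  have hftc := MeasureTheory.integral_eq_of_hasDerivAt_off_countable_of_le f f' hab hs
    hf.continuousOn (fun x hx => hderiv x hx.2) (hf'.intervalIntegrable a b)
  have hint : ∫ x in a..b, f' x ≤ 0 := by
    simpa using intervalIntegral.integral_mono_on (g := fun _ => 0) hab
      (hf'.intervalIntegrable _ _) intervalIntegrable_const (fun x _ => hnonpos x)
  linarith

theorem Function.Periodic.eq_of_antitone {f : ℝ → ℝ} {c : ℝ} (hf : Function.Periodic f c)
    (hc : 0 < c) (hanti : Antitone f) (x y : ℝ) : f x = f y := by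
  suffices h : ∀ x y, f x ≤ f y from le_antisymm (h x y) (h y x)
  intro x y
  obtain ⟨n, hn⟩ := exists_nat_ge ((y - x) / c)
  calc f x = f (x + n * c) := (hf.nat_mul n x).symm
    _ ≤ f y := hanti (by rw [div_le_iff₀ hc] at hn; linarith)

theorem eq_mul_exp_neg_integral_of_hasDerivAt {g c : ℝ → ℝ} {a b t : ℝ}
    (hg : ContinuousOn g (Icc a b)) (hc : Continuous c)
    (hderiv : ∀ x ∈ Ioo a b, HasDerivAt g (-(c x * g x)) x) (ht : t ∈ Icc a b) :
    g t = g a * exp (-∫ s in a..t, c s) := by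
  set E : ℝ → ℝ := fun u => exp (∫ s in a..u, c s)
  have hE : ∀ x, HasDerivAt E (E x * c x) x := fun x =>
    (hc.integral_hasStrictDerivAt a x).hasDerivAt.exp
  have hconst : ∫ _ in a..t, (0 : ℝ) = g t * E t - g a * E a :=
    intervalIntegral.integral_eq_sub_of_hasDerivAt_of_le ht.1
      ((hg.mono (Icc_subset_Icc_right ht.2)).mul
        (fun x _ => (hE x).continuousAt.continuousWithinAt))
      (fun x hx => by
        have := (hderiv x ⟨hx.1, hx.2.trans_le ht.2⟩).mul (hE x)
        rwa [show -(c x * g x) * E x + g x * (E x * c x) = 0 by ring] at this)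
      intervalIntegrable_const
  simp only [intervalIntegral.integral_zero, E, intervalIntegral.integral_same, exp_zero,
    mul_one] at hconst
  rw [exp_neg, eq_mul_inv_iff_mul_eq₀ (exp_pos _).ne']
  linarith

section squareWave

variable {T : ℝ} (hT : 0 < T)
include hT

theorem squareWave_antiperiodic : Function.Antiperiodic (squareWave T) T := by
  intro t
  have hx : (t + T) / (2 * T) = t / (2 * T) + 1 / 2 := by field_simp
  unfold squareWave
  rw [hx]
  set x := t / (2 * T)
  have hfl := Int.floor_add_fract x
  have h0 := Int.fract_nonneg x
  have h1 := Int.fract_lt_one x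
  by_cases h : Int.fract x < 1 / 2
  · have : Int.fract (x + 1 / 2) = Int.fract x + 1 / 2 :=
      Int.fract_eq_iff.2 ⟨by linarith, by linarith, ⌊x⌋, by linarith⟩
    rw [this, if_pos h, if_neg (by linarith)]
  · have : Int.fract (x + 1 / 2) = Int.fract x - 1 / 2 :=
      Int.fract_eq_iff.2 ⟨by linarith, by linarith, ⌊x⌋ + 1, by push_cast; linarith⟩
    rw [this, if_neg h, if_pos (by linarith), neg_neg]

theorem squareWave_of_mem_Ioo {t : ℝ} (ht : t ∈ Ioo 0 T) : squareWave T t = 1 := by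
  have hx : t / (2 * T) < 1 / 2 := by rw [div_lt_iff₀ (by positivity)]; linarith [ht.2]
  rw [squareWave, Int.fract_eq_self.2 ⟨div_nonneg ht.1.le (by positivity), by linarith⟩,
    if_pos hx]

theorem ne_intCast_mul_of_mem_Ioo {t : ℝ} (ht : t ∈ Ioo 0 T) (n : ℤ) : t ≠ n * T := by
  rintro rfl
  have h0 : (0 : ℝ) < n := pos_of_mul_pos_left ht.1 hT.le
  have h1 : (n : ℝ) < 1 := by nlinarith [ht.2]
  norm_cast at h0 h1
  omega

end squareWave

namespace IsSolF

variable {m T : ℝ} {P V W : ℝ → ℝ}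

theorem hasDerivAt_of_mem_Ioo (hT : 0 < T) (hP : IsSolF m T P) {t : ℝ} (ht : t ∈ Ioo 0 T) :
    HasDerivAt P (2 * (1 - m * sinh (P t))) t := by
  simpa only [squareWave_of_mem_Ioo hT ht] using hP.2 t (ne_intCast_mul_of_mem_Ioo hT ht)

theorem hasDerivAt_sq_sub (hV : IsSolF m T V) (hW : IsSolF m T W) {t : ℝ}
    (ht : ∀ n : ℤ, t ≠ n * T) :
    HasDerivAt (fun s => (V s - W s) ^ 2)
      (-(4 * m) * ((V t - W t) * (sinh (V t) - sinh (W t)))) t :=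
  (((hV.2 t ht).sub (hW.2 t ht)).pow 2).congr_deriv (by rw [Pi.sub_apply]; ring)

theorem eq_of_periodic_s8 (hm : 0 < m) (hT : 0 < T) (hV : IsSolF m T V) (hW : IsSolF m T W)
    (hVp : Function.Periodic V (2 * T)) (hWp : Function.Periodic W (2 * T)) : V = W := by
  have hVc := hV.1
  have hWc := hW.1
  set h : ℝ → ℝ := fun s => (V s - W s) ^ 2
  have hanti : Antitone h := antitone_of_hasDerivAt_nonpos_off_countable
    (countable_range fun n : ℤ => (n : ℝ) * T) (by fun_prop)
    (f' := fun t => -(4 * m) * ((V t - W t) * (sinh (V t) - sinh (W t)))) (by fun_prop)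
    (fun t ht => hV.hasDerivAt_sq_sub hW fun n hn => ht ⟨n, hn.symm⟩)
    (fun t => mul_nonpos_of_nonpos_of_nonneg (by linarith)
      ((monotone_id.monovary sinh_strictMono.monotone).sub_mul_sub_nonneg _ _))
  have hperiodic : Function.Periodic h (2 * T) := fun s => by simp only [h, hVp s, hWp s]
  have hconst : ∀ t, h t = h (T / 2) := fun t =>
    hperiodic.eq_of_antitone (by positivity) hanti t (T / 2)
  have hmid : T / 2 ∈ Ioo 0 T := ⟨by positivity, by linarith⟩
  have hzero := (hV.hasDerivAt_sq_sub hW (ne_intCast_mul_of_mem_Ioo hT hmid)).unique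
    (show HasDerivAt h 0 (T / 2) by
      rw [show h = fun _ => h (T / 2) from funext hconst]; exact hasDerivAt_const _ _)
  have hmid_eq : V (T / 2) = W (T / 2) := by
    rcases mul_eq_zero.1 hzero with hm0 | hprod
    · linarith
    rcases mul_eq_zero.1 hprod with hsub | hsinh
    · linarith
    · exact sinh_injective (sub_eq_zero.1 hsinh)
  funext t
  simpa [h, hmid_eq, sub_eq_zero] using hconst t

theorem antiperiodic (hm : 0 < m) (hT : 0 < T) (hP : IsSolF m T P)
    (hPp : Function.Periodic P (2 * T)) : Function.Antiperiodic P T := by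
  have hPc := hP.1
  have hshift : IsSolF m T (fun t => -P (t + T)) := by
    refine ⟨by fun_prop, fun t ht => ?_⟩
    have ht' : ∀ n : ℤ, t + T ≠ n * T := fun n hn => ht (n - 1) (by push_cast; linarith)
    refine ((hP.2 _ ht').comp_add_const t T).neg.congr_deriv ?_
    rw [squareWave_antiperiodic hT t, sinh_neg]
    ring
  have hshift_periodic : Function.Periodic (fun t => -P (t + T)) (2 * T) := fun t => by
    simp only [add_right_comm t, hPp (t + T)]
  intro t
  rw [congrFun (hP.eq_of_periodic_s8 hm hT hshift hPp hshift_periodic) t, neg_neg]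

theorem one_sub_mul_sinh_eq (hT : 0 < T) (hP : IsSolF m T P) {t : ℝ} (ht : t ∈ Icc 0 T) :
    1 - m * sinh (P t) = (1 - m * sinh (P 0)) * exp (-∫ s in 0..t, 2 * m * cosh (P s)) := by
  have hPc := hP.1
  refine eq_mul_exp_neg_integral_of_hasDerivAt (g := fun t => 1 - m * sinh (P t))
    (by fun_prop) (by fun_prop) (fun x hx => ?_) ht
  exact (((hP.hasDerivAt_of_mem_Ioo hT hx).sinh.const_mul m).const_sub 1).congr_deriv (by ring)

section Periodic

variable (hm : 0 < m) (hT : 0 < T) (hP : IsSolF m T P) (hPp : Function.Periodic P (2 * T))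
include hm hT hP hPp

theorem apply_half_period : P T = -P 0 := by
  simpa using hP.antiperiodic hm hT hPp 0

theorem one_sub_mul_sinh_zero_pos : 0 < 1 - m * sinh (P 0) := by
  have hgT := hP.one_sub_mul_sinh_eq hT (right_mem_Icc.2 hT.le)
  rw [hP.apply_half_period hm hT hPp, sinh_neg] at hgT
  -- With `a = m sinh (P 0)`, `hgT` reads `1 + a = (1 - a) * e` with `e > 0`, so `1 - a` and
  -- `1 + a` have the same sign, and their sum is `2`.
  nlinarith [exp_pos (-∫ s in 0..T, 2 * m * cosh (P s))]

theorem monotoneOn_Icc : MonotoneOn P (Icc 0 T) := by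
  refine monotoneOn_of_hasDerivWithinAt_nonneg (convex_Icc 0 T) hP.1.continuousOn
    (f' := fun t => 2 * (1 - m * sinh (P t))) (fun x hx => ?_) (fun x hx => ?_)
  all_goals rw [interior_Icc] at hx
  · exact (hP.hasDerivAt_of_mem_Ioo hT hx).hasDerivWithinAt
  · rw [hP.one_sub_mul_sinh_eq hT (Ioo_subset_Icc_self hx)]
    have := hP.one_sub_mul_sinh_zero_pos hm hT hPp
    positivity

theorem le_apply_half_period (t : ℝ) : P t ≤ P T := by
  have hmono := hP.monotoneOn_Icc hm hT hPp
  have hT0 : T ∈ Icc 0 T := right_mem_Icc.2 hT.le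
  obtain ⟨s, hs, hts⟩ := hPp.exists_mem_Ico₀ (by positivity) t
  rw [hts]
  rcases le_total s T with hsT | hTs
  · exact hmono ⟨hs.1, hsT⟩ hT0 hsT
  · have h0 : P 0 ≤ P (s - T) :=
      hmono (left_mem_Icc.2 hT.le) ⟨by linarith, by linarith [hs.2]⟩ (by linarith)
    linarith [(hP.antiperiodic hm hT hPp).sub_eq s, hP.apply_half_period hm hT hPp]

theorem sSup_range_eq : sSup (range P) = P T :=
  IsGreatest.csSup_eq ⟨mem_range_self T, forall_mem_range.2 (hP.le_apply_half_period hm hT hPp)⟩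

theorem integral_mul_cosh_eq_two_mul_log :
    ∫ s in 0..2 * T, 2 * m * cosh (P s) =
      2 * log ((1 + m * sinh (P T)) / (1 - m * sinh (P T))) := by
  have hPc := hP.1
  have hPa := hP.antiperiodic hm hT hPp
  have hP0 : P 0 = -P T := by rw [hP.apply_half_period hm hT hPp, neg_neg]
  have hint : Continuous fun s => 2 * m * cosh (P s) := by fun_prop
  have hsecond : ∫ s in T..2 * T, 2 * m * cosh (P s) = ∫ s in 0..T, 2 * m * cosh (P s) := by
    have := intervalIntegral.integral_comp_add_right (fun s => 2 * m * cosh (P s)) (a := 0)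
      (b := T) T
    simp only [show ∀ x, P (x + T) = -P x from hPa, cosh_neg, zero_add] at this
    rw [show 2 * T = T + T by ring, this]
  have hpos : 0 < 1 + m * sinh (P T) := by
    simpa [hP0] using hP.one_sub_mul_sinh_zero_pos hm hT hPp
  have hexp : exp (-∫ s in 0..T, 2 * m * cosh (P s)) =
      (1 - m * sinh (P T)) / (1 + m * sinh (P T)) := by
    rw [hP.one_sub_mul_sinh_eq hT (right_mem_Icc.2 hT.le), hP0, sinh_neg]
    field_simp
    ring
  rw [← intervalIntegral.integral_add_adjacent_intervals (b := T) (hint.intervalIntegrable _ _)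
    (hint.intervalIntegrable _ _), hsecond, ← inv_div, log_inv, ← hexp, log_exp]
  ring

end Periodic

end IsSolF

theorem statement8_general (ε m T : ℝ) (hm : 0 < m) (hT : 0 < T)
    (P : ℝ → ℝ) (hP : IsSolF m T P) (hPper : Function.Periodic P (2 * T)) :
    DeltaP ε m T P =
      (1 / T) * Real.log ((1 + m * Real.sinh (sSup (Set.range P))) /
        (1 - m * Real.sinh (sSup (Set.range P)))) - 2 * (m + ε) := by
  have hPc := hP.1
  have hintegrand : ∀ s, 2 * (m * cosh (P s) - m - ε) = 2 * m * cosh (P s) - 2 * (m + ε) :=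
    fun s => by ring
  rw [DeltaP, hP.sSup_range_eq hm hT hPper]
  simp_rw [hintegrand]
  rw [intervalIntegral.integral_sub (Continuous.intervalIntegrable (by fun_prop) _ _)
      intervalIntegrable_const,
    hP.integral_mul_cosh_eq_two_mul_log hm hT hPper, intervalIntegral.integral_const, smul_eq_mul]
  field_simp
  ring

theorem statement8 (ε m T : ℝ) (hε : 0 < ε) (hε1 : ε ≤ 1) (hm : 0 < m) (hT : 0 < T)
    (P : ℝ → ℝ) (hP : IsSolF m T P) (hPper : Function.Periodic P (2 * T)) :
    DeltaP ε m T P =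
      (1 / T) * Real.log ((1 + m * Real.sinh (sSup (Set.range P))) /
        (1 - m * Real.sinh (sSup (Set.range P)))) - 2 * (m + ε) :=
  statement8_general ε m T hm hT P hP hPper
end

section
/- Let 0 < ε ≤ 1, m > 0, T > 0. For h ∈ {−1, +1}, let M^h_{ε,m} be the 2×2 real matrix with rows (h − m − ε, m) and (m, −h − m − ε), and let M(ε,m,T) = exp(T·M^{−1}_{ε,m})·exp(T·M^{+1}_{ε,m}). Set A = √(1+m²), b = e^{TA}, and C₁ = b⁸m⁴ + 4b⁶m² − 2b⁴m⁴ − 8b⁴m² + 4b²m² + m⁴. Then the largest eigenvalue of M(ε,m,T) equals λ₁ = (e^{−2(m+ε)T}/(2A²b²))·(m²b⁴ + 2b² + m² + √C₁). -/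
/-!
Each `M^h_{ε,m} = -(m + ε) I + N_h` with `N_h = !![h, m; m, -h]` and `N_h² = (1 + m²) I`, so it is
diagonalised by an explicit eigenbasis with eigenvalues `-(m + ε) ± A`, and its exponential has
entries that are polynomials in `b = e^{TA}` up to a common factor. Multiplying the two exponentials
gives `M(ε,m,T) = K • !![p, q; r, p]` with `K ≥ 0` and `q r = C₁ ≥ 0`, whose eigenvalues are the
roots `K (p ± √(q r))` of `(x - K p)² = K² q r`.
-/

open Real Filter Set


/-- The matrix `M^h_{ε,m}` of the linear system `Σ^h(ε,m)`. -/
noncomputable def Mswitch (ε m h : ℝ) : Matrix (Fin 2) (Fin 2) ℝ :=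
  !![h - m - ε, m; m, -h - m - ε]

/-- The period (monodromy) map `M(ε,m,T) = exp(T M⁻¹) exp(T M⁺¹)` of `Σ(ε,m,T)`. -/
noncomputable def monodromy (ε m T : ℝ) : Matrix (Fin 2) (Fin 2) ℝ :=
  NormedSpace.exp (T • Mswitch ε m (-1)) * NormedSpace.exp (T • Mswitch ε m 1)

namespace Matrix

theorem mem_spectrum_fin_two_iff {K : Type*} [Field K] (a b c d x : K) :
    x ∈ spectrum K !![a, b; c, d] ↔ (x - a) * (x - d) = b * c := by
  have hsub : algebraMap K (Matrix (Fin 2) (Fin 2) K) x - !![a, b; c, d] =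
      !![x - a, -b; -c, x - d] := by
    ext i j
    fin_cases i <;> fin_cases j <;> simp [algebraMap_matrix_apply]
  rw [spectrum.mem_iff, isUnit_iff_isUnit_det, isUnit_iff_ne_zero, not_ne_iff, hsub,
    det_fin_two_of, neg_mul_neg, sub_eq_zero]

theorem isGreatest_spectrum_fin_two (p q r : ℝ) (hqr : 0 ≤ q * r) :
    IsGreatest (spectrum ℝ !![p, q; r, p]) (p + √(q * r)) := by
  refine ⟨(mem_spectrum_fin_two_iff _ _ _ _ _).2 ?_, fun x hx => ?_⟩
  · linear_combination Real.mul_self_sqrt hqr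
  · rw [mem_spectrum_fin_two_iff, ← sq] at hx
    linarith [Real.le_sqrt_of_sq_le hx.le]

theorem isGreatest_spectrum_smul_fin_two {k : ℝ} (hk : 0 ≤ k) (p q r : ℝ) (hqr : 0 ≤ q * r) :
    IsGreatest (spectrum ℝ (k • !![p, q; r, p])) (k * (p + √(q * r))) := by
  have hsmul : k • !![p, q; r, p] = !![k * p, k * q; k * r, k * p] := by
    ext i j
    fin_cases i <;> fin_cases j <;> simp
  have hkqr : k * q * (k * r) = k ^ 2 * (q * r) := by ring
  have hsqrt : √(k * q * (k * r)) = k * √(q * r) := by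
    rw [hkqr, Real.sqrt_mul (by positivity), Real.sqrt_sq hk]
  rw [hsmul, mul_add, ← hsqrt]
  exact isGreatest_spectrum_fin_two _ _ _ (hkqr ▸ by positivity)

theorem exp_smul_symm_fin_two {T a h m A b : ℝ} (hm : m ≠ 0) (hA : A ≠ 0)
    (hA2 : A ^ 2 = h ^ 2 + m ^ 2) (hb : b = exp (T * A)) :
    NormedSpace.exp (T • !![a + h, m; m, a - h]) =
      (exp (T * a) / (2 * A * b)) •
        !![(A + h) * b ^ 2 + (A - h), m * (b ^ 2 - 1);
           m * (b ^ 2 - 1), (A - h) * b ^ 2 + (A + h)] := by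
  have hb0 : b ≠ 0 := hb ▸ (exp_pos _).ne'
  -- the columns of `U` are eigenvectors for the eigenvalues `a ± A`
  set U : Matrix (Fin 2) (Fin 2) ℝ := !![m, m; A - h, -A - h]
  set V : Matrix (Fin 2) (Fin 2) ℝ := (2 * m * A)⁻¹ • !![A + h, m; A - h, -m]
  set D : Matrix (Fin 2) (Fin 2) ℝ := diagonal ![T * (a + A), T * (a - A)]
  have hUV : U * V = 1 := by
    ext i j
    fin_cases i <;> fin_cases j <;> simp [U, V, mul_apply] <;> field_simp <;> ring
  have hU : IsUnit U := ⟨⟨U, V, hUV, mul_eq_one_comm.mp hUV⟩, rfl⟩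
  have hV : U⁻¹ = V := inv_eq_right_inv hUV
  have hdiag : T • !![a + h, m; m, a - h] = U * D * U⁻¹ := by
    have hMU : T • !![a + h, m; m, a - h] * U = U * D := by
      ext i j
      fin_cases i <;> fin_cases j <;> simp [U, D, mul_apply] <;> grind
    rw [← hMU, Matrix.mul_assoc, hV, hUV, Matrix.mul_one]
  have hexpD : NormedSpace.exp D = !![exp (T * a) * b, 0; 0, exp (T * a) / b] := by
    rw [exp_diagonal, diagonal_fin_two, hb, ← exp_add, ← exp_sub]
    simp [← Real.exp_eq_exp_ℝ, mul_add, mul_sub]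
  rw [hdiag, exp_conj U D hU, hexpD, hV]
  ext i j
  fin_cases i <;> fin_cases j <;> simp [U, V, mul_apply] <;> field_simp <;>
    grind

end Matrix

theorem Mswitch_eq (ε m h : ℝ) : Mswitch ε m h = !![-(m + ε) + h, m; m, -(m + ε) - h] := by
  rw [Mswitch]
  ext i j
  fin_cases i <;> fin_cases j <;> simp <;> ring

theorem monodromy_eq_smul {ε m T A b : ℝ} (hm : m ≠ 0) (hA : A ≠ 0) (hA2 : A ^ 2 = 1 + m ^ 2)
    (hb : b = exp (T * A)) :
    monodromy ε m T = (exp (-2 * (m + ε) * T) / (2 * A ^ 2 * b ^ 2)) •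
      !![m ^ 2 * b ^ 4 + 2 * b ^ 2 + m ^ 2, m * (b ^ 2 - 1) * ((A - 1) * b ^ 2 + A + 1);
         m * (b ^ 2 - 1) * ((A + 1) * b ^ 2 + A - 1), m ^ 2 * b ^ 4 + 2 * b ^ 2 + m ^ 2] := by
  have hb0 : b ≠ 0 := hb ▸ (exp_pos _).ne'
  have hexp2 : exp (-2 * (m + ε) * T) = exp (T * -(m + ε)) ^ 2 := by
    rw [sq, ← exp_add]; ring_nf
  rw [monodromy, Mswitch_eq, Mswitch_eq,
    Matrix.exp_smul_symm_fin_two hm hA (by linear_combination hA2) hb,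
    Matrix.exp_smul_symm_fin_two hm hA (by linear_combination hA2) hb,
    smul_mul_smul_comm, Matrix.mul_fin_two, hexp2]
  ext i j
  fin_cases i <;> fin_cases j <;> simp <;> field_simp <;> grind

theorem statement14_general (ε m T : ℝ) (hm : 0 < m)
    (A b C₁ : ℝ) (hA : A = Real.sqrt (1 + m ^ 2)) (hb : b = Real.exp (T * A))
    (hC₁ : C₁ = b ^ 8 * m ^ 4 + 4 * b ^ 6 * m ^ 2 - 2 * b ^ 4 * m ^ 4 -
      8 * b ^ 4 * m ^ 2 + 4 * b ^ 2 * m ^ 2 + m ^ 4) :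
    IsGreatest (spectrum ℝ (monodromy ε m T))
      (Real.exp (-2 * (m + ε) * T) / (2 * A ^ 2 * b ^ 2) *
        (m ^ 2 * b ^ 4 + 2 * b ^ 2 + m ^ 2 + Real.sqrt C₁)) := by
  have hA2 : A ^ 2 = 1 + m ^ 2 := hA ▸ sq_sqrt (by positivity)
  have hA0 : A ≠ 0 := (hA ▸ sqrt_pos.2 (by positivity) : 0 < A).ne'
  have hC₁_nonneg : 0 ≤ C₁ := by
    rw [show C₁ = m ^ 2 * (b ^ 2 - 1) ^ 2 * (m ^ 2 * (b ^ 2 + 1) ^ 2 + 4 * b ^ 2) by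
      rw [hC₁]; ring]
    positivity
  have hqr : m * (b ^ 2 - 1) * ((A - 1) * b ^ 2 + A + 1) *
      (m * (b ^ 2 - 1) * ((A + 1) * b ^ 2 + A - 1)) = C₁ := by
    rw [hC₁]; linear_combination (m * (b ^ 2 - 1) * (b ^ 2 + 1)) ^ 2 * hA2
  rw [monodromy_eq_smul hm.ne' hA0 hA2 hb, ← hqr]
  exact Matrix.isGreatest_spectrum_smul_fin_two (by positivity) _ _ _ (hqr ▸ hC₁_nonneg)

theorem statement14 (ε m T : ℝ) (hε : 0 < ε) (hε1 : ε ≤ 1) (hm : 0 < m) (hT : 0 < T)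
    (A b C₁ : ℝ) (hA : A = Real.sqrt (1 + m ^ 2)) (hb : b = Real.exp (T * A))
    (hC₁ : C₁ = b ^ 8 * m ^ 4 + 4 * b ^ 6 * m ^ 2 - 2 * b ^ 4 * m ^ 4 -
      8 * b ^ 4 * m ^ 2 + 4 * b ^ 2 * m ^ 2 + m ^ 4) :
    IsGreatest (spectrum ℝ (monodromy ε m T))
      (Real.exp (-2 * (m + ε) * T) / (2 * A ^ 2 * b ^ 2) *
        (m ^ 2 * b ^ 4 + 2 * b ^ 2 + m ^ 2 + Real.sqrt C₁)) :=
  statement14_general ε m T hm A b C₁ hA hb hC₁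
end
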